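/- For gl(2/2) with A_q as defined on the doubly atypical weights μ(x,y) = (x,y;−y,−x), x ≥ y, the (0,0)-row of the inverse matrix is given by (A_q^{-1})_{μ(0,0), μ(−x,−y)} = q^{x+y} for all integers y ≥ x ≥ 0 (identifying (−x,−y;y,x) with μ(−x,−y)), and 0 at all other weights. -/

import Mathlib

/-- Doubly atypical dominant weights of `gl(2/2)`: pairs `(x,y)` with `x ≥ y`,
representing `μ(x,y) = (x,y;−y,−x)`. -/
def Wt : Type := {p : ℤ × ℤ // p.2 ≤ p.1}

instance : DecidableEq Wt := fun a b =>
  decidable_of_iff (a.val = b.val) Subtype.ext_iff.symm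

open Polynomial in
/-- The matrix `A_q` of `gl(2/2)` on doubly atypical dominant weights (here `q = X`). -/
noncomputable def Aq22 (l μ : Wt) : Polynomial ℤ :=
  let q : Polynomial ℤ := X
  let x := l.val.1
  let y := l.val.2
  if x = y then
    (if μ.val = (x, y) then 1 else if μ.val = (x, y - 1) then -q else
      if μ.val = (x - 2, y - 2) then q ^ 2 else 0)
  else if x = y + 1 then
    (if μ.val = (x, y) then 1 else if μ.val = (x, y - 1) then -q else
      if μ.val = (x - 1, y) then -q else if μ.val = (x - 2, y - 1) then -q else
      if μ.val = (x - 1, y - 1) then q ^ 2 else 0)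
  else
    (if μ.val = (x, y) then 1 else if μ.val = (x - 1, y) then -q else
      if μ.val = (x, y - 1) then -q else if μ.val = (x - 1, y - 1) then q ^ 2 else 0)

/-- The weight `μ(x,y) = (x,y;−y,−x)` as a vector in `ℤ⁴`. -/
def embWt (p : Wt) : Fin 4 → ℤ := ![p.val.1, p.val.2, -p.val.2, -p.val.1]

/-- The six positive roots of `gl(2/2)`:
`ε₁−ε₂, δ₁−δ₂, ε₁−δ₁, ε₁−δ₂, ε₂−δ₁, ε₂−δ₂`. -/
def posRoots22 : Fin 6 → Fin 4 → ℤ :=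
  ![![1, -1, 0, 0], ![0, 0, 1, -1], ![1, 0, -1, 0],
    ![1, 0, 0, -1], ![0, 1, -1, 0], ![0, 1, 0, -1]]

/-- The dominance-type partial order: `μ ≤ λ` iff `λ − μ` is a nonnegative integral
combination of positive roots. -/
def wtLE (μ l : Wt) : Prop :=
  ∃ c : Fin 6 → ℕ, embWt l - embWt μ = ∑ i, (c i : ℤ) • posRoots22 i

/-!
Let `f` be the `(0,0)`-row of `B = A_q⁻¹`. By triangularity `f` vanishes at every `μ(a,b)` with
`a > 0`. The column of `A_q` at `μ(a,b)` has exactly four nonzero entries: `1` at `μ(a,b)` itself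
and three more at weights with strictly larger `a + b`. Reading `B A_q = 1` at that column therefore
determines `f(μ(a,b))` from values of `f` closer to the region `a > 0`, so `f` is pinned down by
induction on `-(a + b)`, and it suffices to check that `q^{-(a+b)}` (on `a ≤ 0`) satisfies the same
equations.
-/

open Polynomial

theorem wtLE.fst_le {μ l : Wt} (h : wtLE μ l) : μ.val.1 ≤ l.val.1 := by
  obtain ⟨c, hc⟩ := h
  have h0 : l.val.1 - μ.val.1 = c 0 + c 2 + c 3 := by
    simpa [embWt, posRoots22, Fin.sum_univ_six] using congrFun hc 0
  omega

def wt (a b : ℤ) (h : b ≤ a := by omega) : Wt := ⟨(a, b), h⟩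

@[simp] theorem wt_val (a b : ℤ) (h : b ≤ a) : (wt a b h).val = (a, b) := rfl

theorem eq_wt_iff {ν : Wt} {a b : ℤ} {h : b ≤ a} : ν = wt a b h ↔ ν.val = (a, b) :=
  Subtype.ext_iff

theorem wt_inj {a b c d : ℤ} {h : b ≤ a} {h' : d ≤ c} : wt a b h = wt c d h' ↔ a = c ∧ b = d := by
  rw [eq_wt_iff, wt_val, Prod.mk.injEq]

theorem Aq22_apply_wt_of_lt (ν : Wt) {a b : ℤ} (hab : b < a) :
    Aq22 ν (wt a b) =
      if ν.val = (a, b) then 1 else if ν.val = (a + 1, b) ∨ ν.val = (a, b + 1) then -X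
      else if ν.val = (a + 1, b + 1) then X ^ 2 else 0 := by
  obtain ⟨⟨x, y⟩, hxy⟩ := ν
  unfold Aq22 wt
  simp only [Prod.mk.injEq]
  split_ifs <;> first | rfl | omega

theorem Aq22_apply_wt_self (ν : Wt) (b : ℤ) :
    Aq22 ν (wt b b) =
      if ν.val = (b, b) then 1 else if ν.val = (b + 1, b) ∨ ν.val = (b + 2, b + 1) then -X
      else if ν.val = (b + 2, b + 2) then X ^ 2 else 0 := by
  obtain ⟨⟨x, y⟩, hxy⟩ := ν
  unfold Aq22 wt
  simp only [Prod.mk.injEq]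
  split_ifs <;> first | rfl | omega

theorem finsum_mul_Aq22_wt_of_lt (f : Wt → ℤ[X]) {a b : ℤ} (hab : b < a) :
    ∑ᶠ ν, f ν * Aq22 ν (wt a b) =
      f (wt a b) - X * f (wt (a + 1) b) - X * f (wt a (b + 1))
        + X ^ 2 * f (wt (a + 1) (b + 1)) := by
  rw [finsum_eq_sum_of_support_subset
    (s := {wt a b, wt (a + 1) b, wt a (b + 1), wt (a + 1) (b + 1)})]
  · rw [Finset.sum_insert, Finset.sum_insert, Finset.sum_pair]
    · simp only [Aq22_apply_wt_of_lt _ hab, wt_val, Prod.mk.injEq, ↓reduceIte, add_eq_left,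
        left_eq_add, one_ne_zero, and_true, and_false, and_self, or_true, or_false, or_self,
        mul_one, mul_neg]
      ring
    all_goals simp [wt_inj]
  · intro ν hν
    have := right_ne_zero_of_mul hν
    rw [Aq22_apply_wt_of_lt ν hab] at this
    split_ifs at this <;> simp only [Finset.coe_insert, Finset.coe_singleton, Set.mem_insert_iff,
      Set.mem_singleton_iff, eq_wt_iff] <;> tauto

theorem finsum_mul_Aq22_wt_self (f : Wt → ℤ[X]) (b : ℤ) :
    ∑ᶠ ν, f ν * Aq22 ν (wt b b) =
      f (wt b b) - X * f (wt (b + 1) b) - X * f (wt (b + 2) (b + 1))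
        + X ^ 2 * f (wt (b + 2) (b + 2)) := by
  rw [finsum_eq_sum_of_support_subset
    (s := {wt b b, wt (b + 1) b, wt (b + 2) (b + 1), wt (b + 2) (b + 2)})]
  · rw [Finset.sum_insert, Finset.sum_insert, Finset.sum_pair]
    · simp only [Aq22_apply_wt_self, wt_val, Prod.mk.injEq, ↓reduceIte, add_eq_left, left_eq_add,
        add_right_inj, one_ne_zero, OfNat.one_ne_ofNat, OfNat.ofNat_ne_zero, OfNat.ofNat_ne_one,
        and_true, and_false, and_self, or_true, or_false, or_self, mul_one, mul_neg]
      ring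
    all_goals simp [wt_inj]
  · intro ν hν
    have := right_ne_zero_of_mul hν
    rw [Aq22_apply_wt_self ν b] at this
    split_ifs at this <;> simp only [Finset.coe_insert, Finset.coe_singleton, Set.mem_insert_iff,
      Set.mem_singleton_iff, eq_wt_iff] <;> tauto

theorem eq_of_finsum_mul_Aq22_eq {f g : Wt → ℤ[X]} (hpos : ∀ ν : Wt, 0 < ν.val.1 → f ν = g ν)
    (hrow : ∀ μ : Wt, μ.val.1 ≤ 0 → ∑ᶠ ν, f ν * Aq22 ν μ = ∑ᶠ ν, g ν * Aq22 ν μ) : f = g := by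
  suffices h : ∀ n : ℕ, ∀ μ : Wt, -(μ.val.1 + μ.val.2) < n → f μ = g μ from
    funext fun μ => h ((-(μ.val.1 + μ.val.2)).toNat + 1) μ (by omega)
  intro n
  induction n with
  | zero => exact fun μ hμ => hpos μ (by have := μ.2; omega)
  | succ n ih =>
    rintro ⟨⟨a, b⟩, hab : b ≤ a⟩ (hμ : -(a + b) < n + 1)
    by_cases ha : 0 < a
    · exact hpos _ ha
    have habove : ∀ ν : Wt, a + b < ν.val.1 + ν.val.2 → f ν = g ν := fun ν hν => ih ν (by omega)
    change f (wt a b) = g (wt a b)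
    have hμrow := hrow (wt a b) (by simp only [wt_val]; omega)
    rcases hab.lt_or_eq with hlt | rfl
    · rw [finsum_mul_Aq22_wt_of_lt f hlt, finsum_mul_Aq22_wt_of_lt g hlt,
        habove (wt (a + 1) b) (by simp only [wt_val]; omega),
        habove (wt a (b + 1)) (by simp only [wt_val]; omega),
        habove (wt (a + 1) (b + 1)) (by simp only [wt_val]; omega)] at hμrow
      linear_combination hμrow
    · rw [finsum_mul_Aq22_wt_self f, finsum_mul_Aq22_wt_self g,
        habove (wt (b + 1) b) (by simp only [wt_val]; omega),
        habove (wt (b + 2) (b + 1)) (by simp only [wt_val]; omega),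
        habove (wt (b + 2) (b + 2)) (by simp only [wt_val]; omega)] at hμrow
      linear_combination hμrow

noncomputable def invZeroRow (μ : Wt) : ℤ[X] :=
  if μ.val.1 ≤ 0 then X ^ (-(μ.val.1 + μ.val.2)).toNat else 0

theorem invZeroRow_of_pos {μ : Wt} (h : 0 < μ.val.1) : invZeroRow μ = 0 :=
  if_neg h.not_ge

theorem invZeroRow_wt {a b : ℤ} (hab : b ≤ a) (ha : a ≤ 0) :
    invZeroRow (wt a b) = X ^ (-(a + b)).toNat :=
  if_pos ha

theorem finsum_invZeroRow_mul_Aq22 {μ : Wt} (hμ : μ.val.1 ≤ 0) :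
    ∑ᶠ ν, invZeroRow ν * Aq22 ν μ = if wt 0 0 = μ then 1 else 0 := by
  obtain ⟨⟨a, b⟩, hab : b ≤ a⟩ := μ
  change a ≤ 0 at hμ
  change ∑ᶠ ν, invZeroRow ν * Aq22 ν (wt a b) = if wt 0 0 = wt a b then 1 else 0
  rcases hab.lt_or_eq with hlt | rfl
  · rw [finsum_mul_Aq22_wt_of_lt _ hlt, if_neg (by rw [wt_inj]; omega),
      invZeroRow_wt hlt.le hμ, invZeroRow_wt hlt hμ]
    obtain rfl | ha := hμ.eq_or_lt
    · rw [invZeroRow_of_pos (by simp), invZeroRow_of_pos (by simp),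
        show (-(0 + b)).toNat = (-(0 + (b + 1))).toNat + 1 by omega]
      ring
    · obtain ⟨n, hn⟩ : ∃ n : ℕ, -(a + b) = n + 2 := ⟨(-(a + b) - 2).toNat, by omega⟩
      rw [invZeroRow_wt (by omega) (by omega), invZeroRow_wt (by omega) (by omega),
        show (-(a + b)).toNat = n + 2 by omega, show (-(a + (b + 1))).toNat = n + 1 by omega,
        show (-(a + 1 + b)).toNat = n + 1 by omega, show (-(a + 1 + (b + 1))).toNat = n by omega]
      ring
  · rw [finsum_mul_Aq22_wt_self, invZeroRow_wt le_rfl hμ]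
    obtain rfl | rfl | hb : b = 0 ∨ b = -1 ∨ b ≤ -2 := by omega
    · rw [if_pos rfl, invZeroRow_of_pos (by simp), invZeroRow_of_pos (by simp),
        invZeroRow_of_pos (by simp)]
      simp
    · rw [if_neg (by rw [wt_inj]; omega), invZeroRow_wt (by omega) (by omega),
        invZeroRow_of_pos (by simp), invZeroRow_of_pos (by simp),
        show (-(-1 + -1 : ℤ)).toNat = 2 by rfl, show (-(-1 + 1 + -1 : ℤ)).toNat = 1 by rfl]
      ring
    · obtain ⟨n, hn⟩ : ∃ n : ℕ, -(b + b) = n + 4 := ⟨(-(b + b) - 4).toNat, by omega⟩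
      rw [if_neg (by rw [wt_inj]; omega), invZeroRow_wt (by omega) (by omega),
        invZeroRow_wt (by omega) (by omega), invZeroRow_wt (by omega) (by omega),
        show (-(b + b)).toNat = n + 4 by omega, show (-(b + 1 + b)).toNat = n + 3 by omega,
        show (-(b + 2 + (b + 1))).toNat = n + 1 by omega,
        show (-(b + 2 + (b + 2))).toNat = n by omega]
      ring

theorem Aq22_inverse_zero_row (B : Wt → Wt → Polynomial ℤ)
    (hBtri : ∀ l μ, ¬ wtLE μ l → B l μ = 0)
    (hBA : ∀ l μ : Wt, (∑ᶠ ν : Wt, B l ν * Aq22 ν μ) = if l = μ then 1 else 0) :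
    (∀ (x y : ℕ) (hxy : x ≤ y),
      B ⟨(0, 0), le_refl 0⟩ ⟨(-(x : ℤ), -(y : ℤ)), neg_le_neg (by exact_mod_cast hxy)⟩ =
        Polynomial.X ^ (x + y)) ∧
    (∀ μ : Wt, (¬ ∃ x y : ℕ, x ≤ y ∧ μ.val = (-(x : ℤ), -(y : ℤ))) →
      B ⟨(0, 0), le_refl 0⟩ μ = 0) := by
  have hrow : B (wt 0 0) = invZeroRow := by
    refine eq_of_finsum_mul_Aq22_eq (fun ν hν => ?_) (fun μ hμ => ?_)
    · rw [invZeroRow_of_pos hν]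
      exact hBtri _ _ fun h => hν.not_ge (by simpa using h.fst_le)
    · exact (hBA _ μ).trans (finsum_invZeroRow_mul_Aq22 hμ).symm
  refine ⟨fun x y hxy => ?_, fun ⟨⟨a, b⟩, hab⟩ hμ => ?_⟩
  · change B (wt 0 0) (wt _ _) = _
    rw [hrow, invZeroRow_wt _ (by omega)]
    congr 1
    omega
  · change B (wt 0 0) (wt a b) = 0
    rw [hrow]
    refine invZeroRow_of_pos (not_le.mp fun (ha : a ≤ 0) => hμ ⟨(-a).toNat, (-b).toNat, by omega, ?_⟩)
    rw [Prod.mk.injEq]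
    omega
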